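/- For every natural number n, the game G_n over L5 has mean 0, i.e., the final score of G_n equals the number of moves made by Left minus the number of moves made by Right. -/

import Mathlib

universe u

namespace SetTheory

/-- Pre-games (as in the older Mathlib's `SetTheory.PGame`, since removed from Mathlib). -/
inductive PGame : Type (u + 1)
  | mk : ∀ α β : Type u, (α → PGame) → (β → PGame) → PGame

namespace PGame

/-- The pre-game `0 = { | }`, as in the older Mathlib. -/
instance : Zero PGame :=
  ⟨⟨PEmpty, PEmpty, PEmpty.elim, PEmpty.elim⟩⟩

end PGame

end SetTheory

/-- Combinatorial games over a poset `A` of atoms: either an atomic game `[a]` for an atom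
`a : A`, or a composite game `⟨L|R⟩` where `L` and `R` are nonempty families of games
(the left and right options). -/
inductive PoGame (A : Type u) : Type (u + 1) where
  | atom : A → PoGame A
  | mk : (xl xr : Type u) → (xl → PoGame A) → (xr → PoGame A) →
      Nonempty xl → Nonempty xr → PoGame A

namespace PoGame

variable {A : Type u}

/-- `G` is an atomic game. -/
def IsAtomic : PoGame A → Prop
  | atom _ => True
  | mk _ _ _ _ _ _ => False

/-- `G` is a left option of the game given as second argument. -/
def IsLeftOption (G : PoGame A) : PoGame A → Prop
  | atom _ => False
  | mk _ _ L _ _ _ => ∃ i, L i = G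

/-- `G` is a right option of the game given as second argument. -/
def IsRightOption (G : PoGame A) : PoGame A → Prop
  | atom _ => False
  | mk _ _ _ R _ _ => ∃ j, R j = G

section Order

variable [PartialOrder A]

mutual
  /-- `Le G H` is the relation `G ≤ H` on games over the poset `A`, defined by mutual
  recursion with `Lf` (the relation `G ⊲ H`): `G ≤ H` iff every left option `G^L`
  satisfies `G^L ⊲ H`, every right option `H^R` satisfies `G ⊲ H^R`, and if `G` or `H`
  is atomic then `G ⊲ H`. -/
  inductive Le : PoGame A → PoGame A → Prop
    | intro (G H : PoGame A)
        (hL : ∀ G', IsLeftOption G' G → Lf G' H)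
        (hR : ∀ H', IsRightOption H' H → Lf G H')
        (hA : IsAtomic G ∨ IsAtomic H → Lf G H) : Le G H

  /-- `Lf G H` is the relation `G ⊲ H` on games over the poset `A`: it holds iff some
  right option `G^R` satisfies `G^R ≤ H`, or some left option `H^L` satisfies `G ≤ H^L`,
  or `G = [a]` and `H = [b]` are atomic with `a ≤ b` in `A`. -/
  inductive Lf : PoGame A → PoGame A → Prop
    | rightOption (G H G' : PoGame A) (h : IsRightOption G' G) (hle : Le G' H) : Lf G H
    | leftOption (G H H' : PoGame A) (h : IsLeftOption H' H) (hle : Le G H') : Lf G H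
    | atom (a b : A) (hab : a ≤ b) : Lf (atom a) (atom b)
end

/-- Two games are equivalent if `G ≤ H` and `H ≤ G`. -/
def GEquiv (G H : PoGame A) : Prop := Le G H ∧ Le H G

/-- `G` is locally monotone if `G ≤ G^L` for every left option `G^L` and `G^R ≤ G` for
every right option `G^R`. -/
def LocallyMonotone (G : PoGame A) : Prop :=
  (∀ G', IsLeftOption G' G → Le G G') ∧ (∀ G', IsRightOption G' G → Le G' G)

/-- `G` is an option (left or right) of `H`. -/
def IsOption (G H : PoGame A) : Prop := IsLeftOption G H ∨ IsRightOption G H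

/-- `G` is a position of `H`: `H` itself, an option of `H`, an option of an option, etc. -/
def IsPosition (G H : PoGame A) : Prop := Relation.ReflTransGen IsOption G H

/-- `G` is monotone if every position of `G` is locally monotone. -/
def Monotone (G : PoGame A) : Prop := ∀ K, IsPosition K G → LocallyMonotone K

end Order

/-- The 5-element linearly ordered set `L5 = {-3, -2, -1, 0, 1}`. -/
abbrev L5 : Type := {a : ℤ // -3 ≤ a ∧ a ≤ 1}

/-- `G` has mean `C`: an atomic game `[a]` has mean `a`, and a composite game has mean `C`
iff every left option has mean `C + 1` and every right option has mean `C - 1`. -/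
def HasMean : PoGame L5 → ℤ → Prop
  | atom a, C => (a : ℤ) = C
  | mk _ _ L R _ _, C => (∀ i, HasMean (L i) (C + 1)) ∧ (∀ j, HasMean (R j) (C - 1))

/-- The game `⟨G | H⟩` with a single left option `G` and a single right option `H`. -/
def ofPair (G H : PoGame A) : PoGame A :=
  mk PUnit PUnit (fun _ => G) (fun _ => H) ⟨PUnit.unit⟩ ⟨PUnit.unit⟩

/-- `⋆ = ⟨-1 | -3⟩`. -/
def star : PoGame L5 := ofPair (atom ⟨-1, by norm_num⟩) (atom ⟨-3, by norm_num⟩)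

/-- `M(G) = ⟨1 | G⟩`. -/
def M (G : PoGame L5) : PoGame L5 := ofPair (atom ⟨1, by norm_num⟩) G

/-- `P(G) = ⟨G | -2⟩`. -/
def P (G : PoGame L5) : PoGame L5 := ofPair G (atom ⟨-2, by norm_num⟩)

/-- `P⋆(G) = ⟨G | ⋆⟩`. -/
def Pstar (G : PoGame L5) : PoGame L5 := ofPair G star

/-- `Pn n G = P G` if `n` is odd, `P⋆ G` if `n` is even. -/
def Pn (n : ℕ) (G : PoGame L5) : PoGame L5 := if Odd n then P G else Pstar G

/-- The sequence `G_0 = [0]`, `G_{n+1} = M (Pn n (G_n))`. -/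
def Gseq : ℕ → PoGame L5
  | 0 => atom ⟨0, by norm_num⟩
  | n + 1 => M (Pn n (Gseq n))

/-- The normal-play game obtained from a game over `L5` by replacing every atom by the
normal-play game `0 = { | }`, keeping the tree of left and right options. -/
def np : PoGame L5 → SetTheory.PGame.{0}
  | atom _ => 0
  | mk xl xr L R _ _ => SetTheory.PGame.mk xl xr (fun i => np (L i)) (fun j => np (R j))

end PoGame

namespace PoGame

theorem hasMean_ofPair {G H : PoGame L5} {C : ℤ} :
    HasMean (ofPair G H) C ↔ HasMean G (C + 1) ∧ HasMean H (C - 1) := by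
  simp only [ofPair, HasMean, forall_const]

theorem hasMean_star : HasMean star (-2) :=
  hasMean_ofPair.2 ⟨rfl, rfl⟩

theorem hasMean_M {G : PoGame L5} (h : HasMean G (-1)) : HasMean (M G) 0 :=
  hasMean_ofPair.2 ⟨rfl, h⟩

theorem hasMean_P {G : PoGame L5} (h : HasMean G 0) : HasMean (P G) (-1) :=
  hasMean_ofPair.2 ⟨h, rfl⟩

theorem hasMean_Pstar {G : PoGame L5} (h : HasMean G 0) : HasMean (Pstar G) (-1) :=
  hasMean_ofPair.2 ⟨h, hasMean_star⟩

theorem hasMean_Pn (n : ℕ) {G : PoGame L5} (h : HasMean G 0) : HasMean (Pn n G) (-1) := by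
  unfold Pn
  split_ifs
  · exact hasMean_P h
  · exact hasMean_Pstar h

end PoGame

open PoGame in
/-- For every natural number `n`, the game `G_n` has mean `0`. -/
theorem stmt_2 (n : ℕ) : HasMean (Gseq n) 0 := by
  induction n with
  | zero => rfl
  | succ n ih => exact hasMean_M (hasMean_Pn n ih)
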